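/- Total energy conservation: under the hypotheses of the pointwise energy identity, define E(t) = Σ_i M_i [ p_i(t)² + (1/2)⟨V_i(t), V_i(t)⟩ ] J_i Δx Δy with positive weights M_i. If the exactness condition Σ_i M_i (D̃ w)_i = 0 holds for every discrete flux field w with p vanishing on the boundary (equivalently, Σ_i M_i D̃(p V)_i = 0 whenever p = 0 on ∂Ω), then dE/dt = 0 for all t ≥ 0. -/

import Mathlib

open Finset

def dot2 (a b : ℝ × ℝ) : ℝ := a.1 * b.1 + a.2 * b.2

/-!
Differentiating the energy node by node, the factors `1/(2J)` and `1/J` of the scheme cancel the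
Jacobian weight `J` and the rate of the `i`-th term becomes `-M_i (p_i (D̃V)_i + ⟨(G̃p)_i, V_i⟩) Δx Δy`,
which the discrete product rule rewrites as `-M_i D̃(pV)_i Δx Δy`. Since `p` vanishes on the
boundary, the exactness condition makes the weighted sum of these rates vanish.
-/

theorem HasDerivAt.dot2_self {v : ℝ → ℝ × ℝ} {v' : ℝ × ℝ} {t : ℝ} (hv : HasDerivAt v v' t) :
    HasDerivAt (fun s => dot2 (v s) (v s)) (2 * dot2 (v t) v') t := by
  have hv₁ : HasDerivAt (fun s => (v s).1) v'.1 t := hv.fst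
  have hv₂ : HasDerivAt (fun s => (v s).2) v'.2 t := hv.snd
  refine ((hv₁.mul hv₁).add (hv₂.mul hv₂)).congr_deriv ?_
  unfold dot2
  ring

theorem hasDerivAt_acousticEnergyDensity {q : ℝ → ℝ} {v : ℝ → ℝ × ℝ} {t J d : ℝ} {g : ℝ × ℝ}
    (hJ : J ≠ 0) (hq : HasDerivAt q (-(1 / (2 * J)) * d) t)
    (hv : HasDerivAt v ((-(1 / J)) • g) t) :
    HasDerivAt (fun s => (q s ^ 2 + 1 / 2 * dot2 (v s) (v s)) * J)
      (-(q t * d + dot2 g (v t))) t := by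
  refine (((hq.fun_pow 2).add (hv.dot2_self.const_mul (1 / 2))).mul_const J).congr_deriv ?_
  unfold dot2
  simp only [Prod.smul_fst, Prod.smul_snd, smul_eq_mul]
  field_simp
  ring

theorem stmt_10_general (N : ℕ)
    (Dt : ((Fin N → ℝ × ℝ)) →ₗ[ℝ] (Fin N → ℝ))      -- curvilinear divergence D̃
    (Gt : ((Fin N → ℝ)) →ₗ[ℝ] (Fin N → ℝ × ℝ))      -- curvilinear gradient G̃
    (J M : Fin N → ℝ) (hJ : ∀ i, 0 < J i)
    (Δx Δy : ℝ)
    (S : Set (Fin N))                                -- boundary indices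
    (hprod : ∀ (f : Fin N → ℝ) (w : Fin N → ℝ × ℝ) (i : Fin N),
      Dt (fun k => f k • w k) i = f i * Dt w i + dot2 (Gt f i) (w i))
    (hexact : ∀ (q : Fin N → ℝ) (w : Fin N → ℝ × ℝ),
      (∀ i ∈ S, q i = 0) →
      ∑ i, M i * Dt (fun k => q k • w k) i = 0)
    (p : ℝ → Fin N → ℝ) (V : ℝ → Fin N → ℝ × ℝ)
    (hp : ∀ (t : ℝ) (i : Fin N),
      HasDerivAt (fun s => p s i) (-(1/(2 * J i)) * Dt (V t) i) t)
    (hV : ∀ (t : ℝ) (i : Fin N),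
      HasDerivAt (fun s => V s i) ((-(1/(J i))) • Gt (p t) i) t)
    (hbd : ∀ (t : ℝ), ∀ i ∈ S, p t i = 0) :
    ∀ t : ℝ, 0 ≤ t →
      HasDerivAt (fun s =>
        ∑ i, M i * ((p s i)^2 + (1/2) * dot2 (V s i) (V s i)) * J i * (Δx * Δy))
        0 t := by
  intro t _
  have hnode : ∀ i, HasDerivAt
      (fun s => M i * ((p s i)^2 + (1/2) * dot2 (V s i) (V s i)) * J i * (Δx * Δy))
      (-(Δx * Δy) * (M i * Dt (fun k => p t k • V t k) i)) t := by
    intro i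
    have hdensity := hasDerivAt_acousticEnergyDensity (hJ i).ne' (hp t i) (hV t i)
    convert! (hdensity.const_mul (M i)).mul_const (Δx * Δy) using 1
    · ext s
      ring
    · rw [hprod]
      ring
  have hrate : ∑ i, -(Δx * Δy) * (M i * Dt (fun k => p t k • V t k) i) = 0 := by
    rw [← mul_sum, hexact (p t) (V t) (hbd t), mul_zero]
  simpa only [hrate] using HasDerivAt.fun_sum (u := univ) fun i _ => hnode i

/-- Total semi-discrete energy conservation for the curvilinear acoustic
system under the exactness condition. -/
theorem stmt_10 (N : ℕ)
    (Dt : ((Fin N → ℝ × ℝ)) →ₗ[ℝ] (Fin N → ℝ))      -- curvilinear divergence D̃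
    (Gt : ((Fin N → ℝ)) →ₗ[ℝ] (Fin N → ℝ × ℝ))      -- curvilinear gradient G̃
    (J M : Fin N → ℝ) (hJ : ∀ i, 0 < J i) (hM : ∀ i, 0 < M i)
    (Δx Δy : ℝ) (hΔx : 0 < Δx) (hΔy : 0 < Δy)
    (S : Set (Fin N))                                -- boundary indices
    (hprod : ∀ (f : Fin N → ℝ) (w : Fin N → ℝ × ℝ) (i : Fin N),
      Dt (fun k => f k • w k) i = f i * Dt w i + dot2 (Gt f i) (w i))
    (hexact : ∀ (q : Fin N → ℝ) (w : Fin N → ℝ × ℝ),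
      (∀ i ∈ S, q i = 0) →
      ∑ i, M i * Dt (fun k => q k • w k) i = 0)
    (p : ℝ → Fin N → ℝ) (V : ℝ → Fin N → ℝ × ℝ)
    (hp : ∀ (t : ℝ) (i : Fin N),
      HasDerivAt (fun s => p s i) (-(1/(2 * J i)) * Dt (V t) i) t)
    (hV : ∀ (t : ℝ) (i : Fin N),
      HasDerivAt (fun s => V s i) ((-(1/(J i))) • Gt (p t) i) t)
    (hbd : ∀ (t : ℝ), ∀ i ∈ S, p t i = 0) :
    ∀ t : ℝ, 0 ≤ t →
      HasDerivAt (fun s =>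
        ∑ i, M i * ((p s i)^2 + (1/2) * dot2 (V s i) (V s i)) * J i * (Δx * Δy))
        0 t :=
  stmt_10_general N Dt Gt J M hJ Δx Δy S hprod hexact p V hp hV hbd
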